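/- arXiv:1710.06000 — 4 statements merged into one kernel-verified Lean document; each statement's English description precedes it below -/
import Mathlib

section
/- If L₁ and L₂ are regular languages over Σ, then their overlap assembly L₁ ⊙ L₂ = { z : ∃ x ∈ L₁, ∃ y ∈ L₂, z ∈ x ⊙ y } is regular. -/
/-!
A word `u ++ v ++ w` is recognised by running a DFA for `L₁` on `u`, DFAs for both languages in
parallel on the overlap `v`, and the DFA for `L₂` alone on `w`; guessing the two switching points
gives a finite NFA. To verify it, compute the language accepted from each state: it is
`langOA A L₂`, `A * ⊤ ⊓ B` or `B`, where `A` and `B` are residual languages of the two DFAs, and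
these languages satisfy the derivative equations given by the transitions of the NFA.
-/

/-- Overlap assembly of two languages. -/
def langOA {α : Type*} (L₁ L₂ : Language α) : Language α :=
  {z | ∃ u v w : List α, v ≠ [] ∧ u ++ v ∈ L₁ ∧ v ++ w ∈ L₂ ∧ z = u ++ v ++ w}

open Language

namespace Language

variable {α : Type*} {A C : Language α} {a : α} {x : List α}

@[simp]
theorem mem_top : x ∈ (⊤ : Language α) := trivial

theorem nil_mem_mul : [] ∈ A * C ↔ [] ∈ A ∧ [] ∈ C := by
  simp [mem_mul]

theorem cons_mem_mul :
    a :: x ∈ A * C ↔ ([] ∈ A ∧ a :: x ∈ C) ∨ x ∈ A.leftQuotient [a] * C := by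
  simp only [mem_mul, List.append_eq_cons_iff, mem_leftQuotient]
  constructor
  · rintro ⟨v, hv, w, hw, ⟨rfl, rfl⟩ | ⟨v', rfl, rfl⟩⟩
    · exact .inl ⟨hv, hw⟩
    · exact .inr ⟨v', hv, w, hw, rfl⟩
  · rintro (⟨hv, hw⟩ | ⟨v', hv, w, hw, rfl⟩)
    · exact ⟨[], hv, _, hw, .inl ⟨rfl, rfl⟩⟩
    · exact ⟨a :: v', hv, w, hw, .inr ⟨v', rfl, rfl⟩⟩

end Language

section Overlap

variable {α : Type*} {A B : Language α} {a : α} {x : List α}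

theorem nil_notMem_langOA : [] ∉ langOA A B := by
  rintro ⟨u, v, w, hv, -, -, h⟩
  simp_all

theorem cons_mem_langOA :
    a :: x ∈ langOA A B ↔
      x ∈ langOA (A.leftQuotient [a]) B ∨ x ∈ A.leftQuotient [a] * ⊤ ⊓ B.leftQuotient [a] := by
  simp only [langOA, mem_inf, mem_mul, mem_leftQuotient]
  constructor
  · rintro ⟨u, v, w, hv, huv, hvw, h⟩
    rw [List.append_assoc, List.cons_eq_append_iff] at h
    rcases h with ⟨rfl, h⟩ | ⟨u', rfl, rfl⟩
    · rw [List.append_eq_cons_iff] at h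
      rcases h with ⟨rfl, -⟩ | ⟨v', rfl, rfl⟩
      · exact absurd rfl hv
      · exact .inr ⟨⟨v', huv, w, trivial, rfl⟩, hvw⟩
    · exact .inl ⟨u', v, w, hv, huv, hvw, (List.append_assoc ..).symm⟩
  · rintro (⟨u, v, w, hv, huv, hvw, rfl⟩ | ⟨⟨v', hv, w, -, rfl⟩, hvw⟩)
    · exact ⟨a :: u, v, w, hv, huv, hvw, rfl⟩
    · exact ⟨[], a :: v', w, List.cons_ne_nil _ _, hv, hvw, rfl⟩

end Overlap

namespace NFA

variable {α σ : Type*}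

theorem mem_acceptsFrom_iff_exists (N : NFA α σ) {S : Set σ} {x : List α} :
    x ∈ N.acceptsFrom S ↔ ∃ t ∈ S, x ∈ N.acceptsFrom {t} := by
  simp only [mem_acceptsFrom, mem_evalFrom_iff_exists (S := S)]
  exact ⟨fun ⟨s, hs, t, ht, h⟩ => ⟨t, ht, s, hs, h⟩, fun ⟨t, ht, s, hs, h⟩ => ⟨s, hs, t, ht, h⟩⟩

theorem acceptsFrom_singleton_eq (N : NFA α σ) (L : σ → Language α)
    (nil_mem : ∀ s, [] ∈ L s ↔ s ∈ N.accept)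
    (cons_mem : ∀ s a x, a :: x ∈ L s ↔ ∃ t ∈ N.step s a, x ∈ L t) (s : σ) :
    N.acceptsFrom {s} = L s := by
  ext x
  induction x generalizing s with
  | nil => simp [nil_mem]
  | cons a x ih =>
    rw [cons_mem_acceptsFrom, stepSet_singleton, cons_mem, mem_acceptsFrom_iff_exists]
    simp only [ih]

theorem isRegular_accepts [Finite σ] (N : NFA α σ) : N.accepts.IsRegular := by
  classical
  have := Fintype.ofFinite σ
  exact isRegular_iff.mpr ⟨_, inferInstance, N.toDFA, N.toDFA_correct⟩

end NFA

namespace DFA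

section

variable {α σ : Type*} (M : DFA α σ) {s : σ} {a : α} {x : List α}

theorem nil_mem_acceptsFrom : [] ∈ M.acceptsFrom s ↔ s ∈ M.accept := Iff.rfl

theorem cons_mem_acceptsFrom : a :: x ∈ M.acceptsFrom s ↔ x ∈ M.acceptsFrom (M.step s a) :=
  Iff.rfl

theorem leftQuotient_acceptsFrom :
    (M.acceptsFrom s).leftQuotient x = M.acceptsFrom (M.evalFrom s x) := by
  ext y
  simp only [mem_leftQuotient, mem_acceptsFrom, evalFrom_of_append]

end

variable {α σ₁ σ₂ : Type*} (M₁ : DFA α σ₁) (M₂ : DFA α σ₂)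

/-- State `inl p`: reading `u`; `inr (inl (p, q))`: inside the overlap, after at least one of its
letters; `inr (inr q)`: reading `w`, after at least one of its letters. -/
def overlapNFA : NFA α (σ₁ ⊕ σ₁ × σ₂ ⊕ σ₂) where
  step
    | .inl p, a => {.inl (M₁.step p a), .inr (.inl (M₁.step p a, M₂.step M₂.start a))}
    | .inr (.inl (p, q)), a => {t | p ∈ M₁.accept ∧ t = .inr (.inr (M₂.step q a)) ∨
        t = .inr (.inl (M₁.step p a, M₂.step q a))}
    | .inr (.inr q), a => {.inr (.inr (M₂.step q a))}
  start := {.inl M₁.start}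
  accept := {s | match s with
    | .inl _ => False
    | .inr (.inl (p, q)) => p ∈ M₁.accept ∧ q ∈ M₂.accept
    | .inr (.inr q) => q ∈ M₂.accept}

def overlapNFAStateLang : σ₁ ⊕ σ₁ × σ₂ ⊕ σ₂ → Language α
  | .inl p => langOA (M₁.acceptsFrom p) M₂.accepts
  | .inr (.inl (p, q)) => M₁.acceptsFrom p * ⊤ ⊓ M₂.acceptsFrom q
  | .inr (.inr q) => M₂.acceptsFrom q

theorem overlapNFA_accepts : (overlapNFA M₁ M₂).accepts = langOA M₁.accepts M₂.accepts := by
  rw [NFA.accepts_eq_acceptsFrom_start]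
  refine (overlapNFA M₁ M₂).acceptsFrom_singleton_eq (overlapNFAStateLang M₁ M₂) ?_ ?_ _
  · rintro (p | ⟨p, q⟩ | q) <;>
      simp [overlapNFAStateLang, overlapNFA, nil_notMem_langOA, nil_mem_mul,
        nil_mem_acceptsFrom]
  · rintro (p | ⟨p, q⟩ | q) a x
    · simp [overlapNFAStateLang, overlapNFA, cons_mem_langOA, leftQuotient_acceptsFrom,
        leftQuotient_accepts_apply]
    · simp [overlapNFAStateLang, overlapNFA, cons_mem_mul, cons_mem_acceptsFrom,
        nil_mem_acceptsFrom, leftQuotient_acceptsFrom]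
      tauto
    · simp [overlapNFAStateLang, overlapNFA, cons_mem_acceptsFrom]

end DFA

theorem langOA_regular {α : Type*} (L₁ L₂ : Language α)
    (h₁ : L₁.IsRegular) (h₂ : L₂.IsRegular) : (langOA L₁ L₂).IsRegular := by
  obtain ⟨σ₁, _, M₁, rfl⟩ := h₁
  obtain ⟨σ₂, _, M₂, rfl⟩ := h₂
  exact DFA.overlapNFA_accepts M₁ M₂ ▸ (DFA.overlapNFA M₁ M₂).isRegular_accepts
end

section
/- For m ≥ 2 and n ≥ 1, if L_m has state complexity at most m and L_n has state complexity at most n, then the state complexity of L_m ⊙ L_n is at most 2(m−1)·3^(n−1) + 2^n. -/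
/-- `scLe L k` means the state complexity of `L` is at most `k`:
`L` is accepted by some DFA with at most `k` states. -/
def scLe {α : Type*} (L : Language α) (k : ℕ) : Prop :=
  ∃ (Q : Type) (_ : Fintype Q) (M : DFA α Q), Fintype.card Q ≤ k ∧ M.accepts = L

section OA

variable {α : Type*} {Q₁ Q₂ : Type}

/-- Invariant on states of the overlap-assembly DFA. -/
def OAGood (M₁ : DFA α Q₁) (M₂ : DFA α Q₂) (x : Q₁ × Set Q₂ × Set Q₂) : Prop :=
  M₂.start ∈ x.2.1 ∧ x.2.2 ⊆ x.2.1 ∧ (x.1 ∈ M₁.accept → x.2.1 = x.2.2 ∪ {M₂.start})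

/-- One step of the overlap-assembly DFA (raw, on the full product). -/
def oaStep (M₁ : DFA α Q₁) (M₂ : DFA α Q₂) (x : Q₁ × Set Q₂ × Set Q₂) (a : α) :
    Q₁ × Set Q₂ × Set Q₂ :=
  (M₁.step x.1 a,
   (fun p => M₂.step p a) '' x.2.1 ∪ {M₂.start},
   (fun p => M₂.step p a) '' x.2.2 ∪
     {p | M₁.step x.1 a ∈ M₁.accept ∧ ∃ q ∈ x.2.1, M₂.step q a = p})

lemma oaGood_step {M₁ : DFA α Q₁} {M₂ : DFA α Q₂} {x : Q₁ × Set Q₂ × Set Q₂}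
    (hx : OAGood M₁ M₂ x) (a : α) : OAGood M₁ M₂ (oaStep M₁ M₂ x a) := by
  obtain ⟨h1, h2, h3⟩ := hx
  refine ⟨Or.inr rfl, ?_, ?_⟩
  · rintro p (⟨q, hq, rfl⟩ | ⟨-, q, hq, rfl⟩)
    · exact Or.inl ⟨q, h2 hq, rfl⟩
    · exact Or.inl ⟨q, hq, rfl⟩
  · intro hacc
    ext p
    constructor
    · rintro (⟨q, hq, rfl⟩ | rfl)
      · exact Or.inl (Or.inr ⟨hacc, q, hq, rfl⟩)
      · exact Or.inr rfl
    · rintro (h | rfl)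
      · rcases h with ⟨q, hq, rfl⟩ | ⟨-, q, hq, rfl⟩
        · exact Or.inl ⟨q, h2 hq, rfl⟩
        · exact Or.inl ⟨q, hq, rfl⟩
      · exact Or.inr rfl

/-- The overlap-assembly DFA, on the subtype of good states. -/
def oaDFA (M₁ : DFA α Q₁) (M₂ : DFA α Q₂) :
    DFA α {x : Q₁ × Set Q₂ × Set Q₂ // OAGood M₁ M₂ x} where
  step x a := ⟨oaStep M₁ M₂ x.val a, oaGood_step x.prop a⟩
  start := ⟨(M₁.start, {M₂.start}, ∅), rfl, by simp, fun _ => by simp⟩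
  accept := {x | ∃ t ∈ x.val.2.2, t ∈ M₂.accept}

/-- helper: splitting off the last letter of a decomposition. -/
lemma oa_split_last {zs u v : List α} {a : α} (h : zs ++ [a] = u ++ v) (hv : v ≠ []) :
    ∃ v', v = v' ++ [a] ∧ zs = u ++ v' := by
  obtain ⟨v', l, rfl⟩ : ∃ v' l, v = v' ++ [l] :=
    ⟨v.dropLast, v.getLast hv, (List.dropLast_append_getLast hv).symm⟩
  rw [← List.append_assoc] at h
  obtain ⟨h1, h2⟩ := List.append_inj' h rfl
  obtain rfl : a = l := by simpa using h2
  exact ⟨v', rfl, h1⟩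

lemma oa_eval (M₁ : DFA α Q₁) (M₂ : DFA α Q₂) (z : List α) :
    ((oaDFA M₁ M₂).eval z).val =
      (M₁.eval z,
       {p | ∃ u v, z = u ++ v ∧ p = M₂.eval v},
       {p | ∃ u v w, z = u ++ v ++ w ∧ v ≠ [] ∧ M₁.eval (u ++ v) ∈ M₁.accept ∧
          p = M₂.eval (v ++ w)}) := by
  induction z using List.reverseRecOn with
  | nil =>
    refine Prod.ext rfl (Prod.ext ?_ ?_)
    · ext p
      simp only [DFA.eval_nil]
      constructor
      · rintro rfl
        exact ⟨[], [], rfl, rfl⟩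
      · rintro ⟨u, v, huv, rfl⟩
        obtain ⟨rfl, rfl⟩ := by simpa [List.append_eq_nil_iff] using huv.symm
        rfl
    · ext p
      constructor
      · intro h
        exact absurd h (Set.notMem_empty p)
      · rintro ⟨u, v, w, huv, hv, -, -⟩
        exact absurd (List.append_eq_nil_iff.mp (List.append_eq_nil_iff.mp huv.symm).1).2 hv
  | append_singleton zs a ih =>
    have hstep : ((oaDFA M₁ M₂).eval (zs ++ [a])).val =
        oaStep M₁ M₂ ((oaDFA M₁ M₂).eval zs).val a := by
      show ((oaDFA M₁ M₂).evalFrom _ (zs ++ [a])).val = _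
      rw [DFA.evalFrom_append_singleton]
      rfl
    rw [hstep, ih]
    have hq : M₁.step (M₁.eval zs) a = M₁.eval (zs ++ [a]) :=
      (M₁.eval_append_singleton zs a).symm
    refine Prod.ext hq (Prod.ext ?_ ?_)
    · -- S-component
      ext p
      simp only [oaStep, Set.mem_union, Set.mem_image, Set.mem_setOf_eq,
        Set.mem_singleton_iff]
      constructor
      · rintro (⟨q, ⟨u, v, rfl, rfl⟩, rfl⟩ | rfl)
        · exact ⟨u, v ++ [a], by rw [List.append_assoc],
            (M₂.eval_append_singleton v a).symm⟩
        · exact ⟨zs ++ [a], [], by simp, rfl⟩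
      · rintro ⟨u, v, huv, rfl⟩
        by_cases hv : v = []
        · subst hv; right; rfl
        · obtain ⟨v', rfl, rfl⟩ := oa_split_last huv hv
          exact Or.inl ⟨M₂.eval v', ⟨u, v', rfl, rfl⟩,
            (M₂.eval_append_singleton v' a).symm⟩
    · -- T-component
      ext p
      simp only [oaStep, Set.mem_union, Set.mem_image, Set.mem_setOf_eq, hq]
      constructor
      · rintro (⟨q, ⟨u, v, w, rfl, hv, hF, rfl⟩, rfl⟩ | ⟨hF, q, ⟨u, v, rfl, rfl⟩, rfl⟩)
        · exact ⟨u, v, w ++ [a], by rw [← List.append_assoc], hv, hF,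
            by rw [← List.append_assoc, M₂.eval_append_singleton]⟩
        · refine ⟨u, v ++ [a], [], by simp [List.append_assoc], by simp, ?_, ?_⟩
          · rwa [← List.append_assoc]
          · rw [List.append_nil, M₂.eval_append_singleton]
      · rintro ⟨u, v, w, huvw, hv, hF, rfl⟩
        by_cases hw : w = []
        · subst hw
          rw [List.append_nil] at huvw ⊢
          obtain ⟨v', rfl, rfl⟩ := oa_split_last huvw hv
          right
          rw [← List.append_assoc] at hF
          exact ⟨hF, M₂.eval v', ⟨u, v', rfl, rfl⟩,
            (M₂.eval_append_singleton v' a).symm⟩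
        · obtain ⟨w', rfl, rfl⟩ := oa_split_last huvw hw
          left
          refine ⟨M₂.eval (v ++ w'), ⟨u, v, w', rfl, hv, hF, rfl⟩, ?_⟩
          rw [← List.append_assoc, M₂.eval_append_singleton]

lemma oa_accepts (M₁ : DFA α Q₁) (M₂ : DFA α Q₂) :
    (oaDFA M₁ M₂).accepts = langOA M₁.accepts M₂.accepts := by
  ext z
  rw [DFA.mem_accepts]
  show (∃ t ∈ ((oaDFA M₁ M₂).eval z).val.2.2, t ∈ M₂.accept) ↔ _
  rw [oa_eval]
  constructor
  · rintro ⟨t, ⟨u, v, w, hz, hv, hF, rfl⟩, hacc⟩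
    exact ⟨u, v, w, hv, (DFA.mem_accepts _).mpr hF, (DFA.mem_accepts _).mpr hacc, hz⟩
  · rintro ⟨u, v, w, hv, hF, hacc, hz⟩
    exact ⟨M₂.eval (v ++ w), ⟨u, v, w, hz, hv, (DFA.mem_accepts _).mp hF, rfl⟩,
      (DFA.mem_accepts _).mp hacc⟩

lemma oa_card_le [Fintype Q₁] [Fintype Q₂] (M₁ : DFA α Q₁) (M₂ : DFA α Q₂)
    [Fintype {x : Q₁ × Set Q₂ × Set Q₂ // OAGood M₁ M₂ x}]
    [Fintype {q : Q₁ // q ∉ M₁.accept}] [Fintype {q : Q₁ // q ∈ M₁.accept}] :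
    Fintype.card {x : Q₁ × Set Q₂ × Set Q₂ // OAGood M₁ M₂ x} ≤
      Fintype.card {q : Q₁ // q ∉ M₁.accept} * (2 * 3 ^ (Fintype.card Q₂ - 1)) +
      Fintype.card {q : Q₁ // q ∈ M₁.accept} * 2 ^ Fintype.card Q₂ := by
  classical
  let φ : {x : Q₁ × Set Q₂ × Set Q₂ // OAGood M₁ M₂ x} →
      ({q : Q₁ // q ∉ M₁.accept} × (Fin 2 × ({p : Q₂ // p ≠ M₂.start} → Fin 3))) ⊕
      ({q : Q₁ // q ∈ M₁.accept} × (Q₂ → Bool)) := fun x =>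
    if h : x.val.1 ∈ M₁.accept then
      Sum.inr (⟨x.val.1, h⟩, fun p => decide (p ∈ x.val.2.2))
    else
      Sum.inl (⟨x.val.1, h⟩,
        (if M₂.start ∈ x.val.2.2 then 1 else 0,
         fun p => if p.val ∈ x.val.2.2 then 2 else if p.val ∈ x.val.2.1 then 1 else 0))
  have hφ : Function.Injective φ := by
    rintro ⟨⟨q, S, T⟩, hs, hts, hacc⟩ ⟨⟨q', S', T'⟩, hs', hts', hacc'⟩ h
    simp only [φ] at h
    by_cases h1 : q ∈ M₁.accept <;> by_cases h2 : q' ∈ M₁.accept <;>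
      simp only [h1, h2, dif_pos, dif_neg, not_false_iff, Sum.inr.injEq, Sum.inl.injEq,
        Prod.mk.injEq, Subtype.mk.injEq, reduceCtorEq] at h
    · obtain ⟨hqq, hT⟩ := h
      subst hqq
      have hTT : T = T' := by
        ext p
        have e := congrFun hT p
        rw [decide_eq_decide] at e
        exact e
      subst hTT
      have e1 : S = T ∪ {M₂.start} := hacc h1
      have e2 : S' = T ∪ {M₂.start} := hacc' h2
      have hSS : S = S' := e1.trans e2.symm
      subst hSS
      rfl
    · obtain ⟨hqq, hflag, hcode⟩ := h
      subst hqq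
      have hT0 : M₂.start ∈ T ↔ M₂.start ∈ T' := by
        by_cases a1 : M₂.start ∈ T <;> by_cases a2 : M₂.start ∈ T' <;>
          simp only [a1, a2, if_pos, if_neg, if_true, if_false, iff_true, iff_false,
            not_true, not_false_iff] at hflag ⊢ <;>
          first
          | trivial
          | exact absurd hflag (by decide)
          | exact absurd hflag.symm (by decide)
      have key : ∀ p : Q₂, p ≠ M₂.start → ((p ∈ T ↔ p ∈ T') ∧ (p ∈ S ↔ p ∈ S')) := by
        intro p hp
        have e := congrFun hcode ⟨p, hp⟩
        simp only at e
        by_cases b1 : p ∈ T <;> by_cases b2 : p ∈ T' <;>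
          by_cases c1 : p ∈ S <;> by_cases c2 : p ∈ S' <;>
          simp only [b1, b2, c1, c2, if_true, if_false, if_pos, if_neg, not_false_iff,
            iff_true, iff_false, true_and, and_true, not_true, iff_self] at e ⊢ <;>
          first
          | trivial
          | exact absurd (hts b1) c1
          | exact absurd (hts' b2) c2
          | exact absurd e (by decide)
          | exact absurd e.symm (by decide)
      have hTT : T = T' := by
        ext p
        by_cases hp : p = M₂.start
        · subst hp; exact hT0
        · exact (key p hp).1
      have hSS : S = S' := by
        ext p
        by_cases hp : p = M₂.start
        · subst hp; exact iff_of_true hs hs'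
        · exact (key p hp).2
      subst hTT; subst hSS
      rfl
  calc Fintype.card {x : Q₁ × Set Q₂ × Set Q₂ // OAGood M₁ M₂ x}
      ≤ Fintype.card
          (({q : Q₁ // q ∉ M₁.accept} × (Fin 2 × ({p : Q₂ // p ≠ M₂.start} → Fin 3))) ⊕
           ({q : Q₁ // q ∈ M₁.accept} × (Q₂ → Bool))) := Fintype.card_le_of_injective φ hφ
    _ = _ := by
        have hne : Fintype.card {p : Q₂ // p ≠ M₂.start} = Fintype.card Q₂ - 1 := by
          simp only [ne_eq]
          rw [Fintype.card_subtype_compl, Fintype.card_subtype_eq]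
        rw [Fintype.card_sum, Fintype.card_prod, Fintype.card_prod, Fintype.card_prod,
          Fintype.card_fun, Fintype.card_fun, Fintype.card_fin, Fintype.card_fin,
          Fintype.card_bool, hne]

end OA

theorem oa_state_complexity_upper_bound {α : Type*} (m n : ℕ) (hm : 2 ≤ m) (hn : 1 ≤ n)
    (L₁ L₂ : Language α) (h₁ : scLe L₁ m) (h₂ : scLe L₂ n) :
    scLe (langOA L₁ L₂) (2 * (m - 1) * 3 ^ (n - 1) + 2 ^ n) := by
  classical
  obtain ⟨Q₁, i₁, M₁, hc₁, rfl⟩ := h₁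
  obtain ⟨Q₂, i₂, M₂, hc₂, rfl⟩ := h₂
  by_cases hF : M₁.accept = ∅
  · -- L₁ = ∅, so the overlap assembly is empty
    refine ⟨Unit, inferInstance, ⟨fun _ _ => Unit.unit, Unit.unit, ∅⟩, ?_, ?_⟩
    · have h2n : 1 ≤ 2 ^ n := Nat.one_le_two_pow
      rw [Fintype.card_unit]
      omega
    · ext z
      rw [DFA.mem_accepts]
      constructor
      · intro h
        exact absurd h (Set.notMem_empty _)
      · rintro ⟨u, v, w, -, hmem, -⟩
        rw [DFA.mem_accepts, hF] at hmem
        exact absurd hmem (Set.notMem_empty _)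
  · -- main case
    haveI I : Fintype {x : Q₁ × Set Q₂ × Set Q₂ // OAGood M₁ M₂ x} := Fintype.ofFinite _
    refine ⟨_, I, oaDFA M₁ M₂, ?_, oa_accepts M₁ M₂⟩
    refine le_trans (oa_card_le M₁ M₂) ?_
    -- cardinal arithmetic
    set f := Fintype.card {q : Q₁ // q ∈ M₁.accept} with hf
    set f' := Fintype.card {q : Q₁ // q ∉ M₁.accept} with hf'
    have hsum : f' + f = Fintype.card Q₁ := by
      rw [hf, hf', Fintype.card_subtype_compl]
      have : f ≤ Fintype.card Q₁ := by
        rw [hf]; exact Fintype.card_subtype_le _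
      omega
    have hfpos : 1 ≤ f := by
      rw [hf]
      obtain ⟨q, hq⟩ := Set.nonempty_iff_ne_empty.mpr hF
      exact Fintype.card_pos_iff.mpr ⟨⟨q, hq⟩⟩
    have hk2pos : 1 ≤ Fintype.card Q₂ := Fintype.card_pos_iff.mpr ⟨M₂.start⟩
    have h3 : (3 : ℕ) ^ (Fintype.card Q₂ - 1) ≤ 3 ^ (n - 1) :=
      Nat.pow_le_pow_right (by norm_num) (by omega)
    have h2 : (2 : ℕ) ^ Fintype.card Q₂ ≤ 2 ^ n :=
      Nat.pow_le_pow_right (by norm_num) hc₂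
    have h23 : (2 : ℕ) ^ n ≤ 2 * 3 ^ (n - 1) := by
      calc (2 : ℕ) ^ n = 2 * 2 ^ (n - 1) := by
            rw [← pow_succ']
            congr 1
            omega
        _ ≤ 2 * 3 ^ (n - 1) := by
            exact Nat.mul_le_mul_left 2 (Nat.pow_le_pow_left (by norm_num) _)
    have hfm : f' + f ≤ m := hsum ▸ hc₁
    calc f' * (2 * 3 ^ (Fintype.card Q₂ - 1)) + f * 2 ^ Fintype.card Q₂
        ≤ f' * (2 * 3 ^ (n - 1)) + f * 2 ^ n := by
          gcongr
      _ = f' * (2 * 3 ^ (n - 1)) + (f - 1) * 2 ^ n + 2 ^ n := by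
          have : f * 2 ^ n = (f - 1) * 2 ^ n + 2 ^ n := by
            rw [Nat.sub_one_mul]
            have : 2 ^ n ≤ f * 2 ^ n := Nat.le_mul_of_pos_left _ hfpos
            omega
          omega
      _ ≤ f' * (2 * 3 ^ (n - 1)) + (f - 1) * (2 * 3 ^ (n - 1)) + 2 ^ n := by
          gcongr
      _ = (f' + (f - 1)) * (2 * 3 ^ (n - 1)) + 2 ^ n := by ring
      _ ≤ (m - 1) * (2 * 3 ^ (n - 1)) + 2 ^ n := by
          gcongr
          omega
      _ = 2 * (m - 1) * 3 ^ (n - 1) + 2 ^ n := by ring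
end

section
/- Let m, n ≥ 1 and let L_m, L_n be unary languages of state complexity at most m and n respectively, both infinite. Then every word a^t with t ≥ m + n − 1 belongs to L_m ⊙ L_n; consequently the state complexity of L_m ⊙ L_n is at most m + n. -/
/-- The unary word `a^k`. -/
def urep (k : ℕ) : List Unit := List.replicate k ()

theorem urep_add (x y : ℕ) : urep (x + y) = urep x ++ urep y :=
  List.replicate_add x y ()

theorem eq_urep_length (l : List Unit) : l = urep l.length :=
  List.eq_replicate_length.2 fun _ _ => rfl

theorem Function.exists_iterate_add_eq_of_fintype {Q : Type*} [Fintype Q] (g : Q → Q) (x : Q) :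
    ∃ a p, 0 < p ∧ a + p ≤ Fintype.card Q ∧ ∀ t, a ≤ t → g^[t + p] x = g^[t] x := by
  have of_eq : ∀ a b, a < b → b ≤ Fintype.card Q → g^[b] x = g^[a] x →
      ∃ a p, 0 < p ∧ a + p ≤ Fintype.card Q ∧ ∀ t, a ≤ t → g^[t + p] x = g^[t] x :=
    fun a b hab hb h => ⟨a, b - a, by omega, by omega, fun t ht => by
      rw [show t + (b - a) = (t - a) + b by omega, iterate_add_apply, h, ← iterate_add_apply,
        Nat.sub_add_cancel ht]⟩
  obtain ⟨i, j, hij, hg⟩ := Fintype.exists_ne_map_eq_of_card_lt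
    (fun i : Fin (Fintype.card Q + 1) => g^[i] x) (by simp)
  rcases Nat.lt_or_gt_of_ne (Fin.val_ne_of_ne hij) with h | h
  · exact of_eq _ _ h (by omega) hg.symm
  · exact of_eq _ _ h (by omega) hg

theorem Set.Infinite.exists_mem_window_of_periodic {S : Set ℕ} (hS : S.Infinite) {a p : ℕ}
    (hp : 0 < p) (hper : ∀ s, a ≤ s → s + p ∈ S → s ∈ S) (t : ℕ) (ht : a + p ≤ t + 1) :
    ∃ s ∈ S, s ≤ t ∧ t < s + p := by
  suffices descend : ∀ u ∈ S, t < u + p → ∃ s ∈ S, s ≤ t ∧ t < s + p by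
    obtain ⟨u, hu, htu⟩ := hS.exists_gt t
    exact descend u hu (by omega)
  intro u
  induction u using Nat.strong_induction_on with
  | _ u ih =>
    intro hu htu
    by_cases hut : u ≤ t
    · exact ⟨u, hu, hut, htu⟩
    · exact ih (u - p) (by omega) (hper _ (by omega) (by rwa [Nat.sub_add_cancel (by omega)]))
        (by omega)

theorem DFA.eval_urep {Q : Type*} (M : DFA Unit Q) (t : ℕ) :
    M.eval (urep t) = (M.step · ())^[t] M.start := by
  induction t with
  | zero => rfl
  | succ t ih =>
    rw [urep_add, Function.iterate_succ_apply', ← ih]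
    exact M.eval_append_singleton _ ()

theorem infinite_setOf_urep_mem {L : Language Unit} (hL : L.Infinite) :
    {t | urep t ∈ L}.Infinite :=
  Set.Infinite.of_image urep <| hL.mono fun l hl =>
    ⟨l.length, by rwa [Set.mem_ofPred_eq, ← eq_urep_length], (eq_urep_length l).symm⟩

theorem scLe.pos {α : Type*} {L : Language α} {k : ℕ} (h : scLe L k) : 0 < k :=
  let ⟨_, _, M, hcard, _⟩ := h
  (Fintype.card_pos_iff.2 ⟨M.start⟩).trans_le hcard

theorem scLe.exists_urep_mem_window {L : Language Unit} {m : ℕ} (h : scLe L m)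
    (hL : L.Infinite) (t : ℕ) (ht : m ≤ t + 1) : ∃ s ≤ t, t < s + m ∧ urep s ∈ L := by
  obtain ⟨Q, _, M, hcard, rfl⟩ := h
  obtain ⟨a, p, hp, hap, hper⟩ := Function.exists_iterate_add_eq_of_fintype (M.step · ()) M.start
  have hperL : ∀ s, a ≤ s → s + p ∈ {t | urep t ∈ M.accepts} → s ∈ {t | urep t ∈ M.accepts} := by
    intro s hs
    simp only [Set.mem_ofPred_eq, DFA.mem_accepts, DFA.eval_urep, hper s hs, imp_self]
  obtain ⟨s, hs, hst, hts⟩ :=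
    (infinite_setOf_urep_mem hL).exists_mem_window_of_periodic hp hperL t (by omega)
  exact ⟨s, hst, by omega, hs⟩

theorem urep_mem_langOA {L₁ L₂ : Language Unit} {s r t : ℕ} (hs : urep s ∈ L₁)
    (hr : urep r ∈ L₂) (hst : s ≤ t) (hrt : r ≤ t) (hlt : t < s + r) :
    urep t ∈ langOA L₁ L₂ := by
  refine ⟨urep (t - r), urep (s + r - t), urep (t - s), ?_, ?_, ?_, ?_⟩
  · simp only [urep, ne_eq, List.replicate_eq_nil_iff]
    omega
  · rwa [← urep_add, show t - r + (s + r - t) = s by omega]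
  · rwa [← urep_add, show s + r - t + (t - s) = r by omega]
  · rw [← urep_add, ← urep_add, show t - r + (s + r - t) + (t - s) = t by omega]

theorem scLe_succ_of_forall_le_mem {L : Language Unit} (K : ℕ) (hL : ∀ t, K ≤ t → urep t ∈ L) :
    scLe L (K + 1) := by
  let M : DFA Unit (Fin (K + 1)) :=
    { step := fun q _ => ⟨min (q + 1) K, by omega⟩
      start := 0
      accept := {q | urep q ∈ L} }
  have eval_eq : ∀ t, M.eval (urep t) = ⟨min t K, by omega⟩ := by
    intro t
    induction t with
    | zero => rfl
    | succ t ih =>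
      rw [urep_add, show urep 1 = [()] from rfl, DFA.eval_append_singleton, ih]
      exact Fin.ext (by simp [M]; omega)
  refine ⟨Fin (K + 1), inferInstance, M, by simp, ?_⟩
  ext l
  rw [eq_urep_length l, DFA.mem_accepts, eval_eq]
  show urep (min l.length K) ∈ L ↔ urep l.length ∈ L
  rcases le_total l.length K with h | h
  · rw [min_eq_left h]
  · rw [min_eq_right h]
    exact iff_of_true (hL K le_rfl) (hL _ h)

theorem unary_infinite_oa_upper_bound_general (m n : ℕ)
    (L₁ L₂ : Language Unit) (h₁ : scLe L₁ m) (h₂ : scLe L₂ n)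
    (hinf₁ : L₁.Infinite) (hinf₂ : L₂.Infinite) :
    (∀ t, m + n - 1 ≤ t → urep t ∈ langOA L₁ L₂) ∧ scLe (langOA L₁ L₂) (m + n) := by
  have hm := h₁.pos
  have long_mem : ∀ t, m + n - 1 ≤ t → urep t ∈ langOA L₁ L₂ := by
    intro t ht
    obtain ⟨s, hst, hts, hs⟩ := h₁.exists_urep_mem_window hinf₁ t (by omega)
    obtain ⟨r, hrt, htr, hr⟩ := h₂.exists_urep_mem_window hinf₂ t (by omega)
    exact urep_mem_langOA hs hr hst hrt (by omega)
  refine ⟨long_mem, ?_⟩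
  simpa only [Nat.sub_add_cancel (by omega : 1 ≤ m + n)] using
    scLe_succ_of_forall_le_mem _ long_mem

theorem unary_infinite_oa_upper_bound (m n : ℕ) (hm : 1 ≤ m) (hn : 1 ≤ n)
    (L₁ L₂ : Language Unit) (h₁ : scLe L₁ m) (h₂ : scLe L₂ n)
    (hinf₁ : L₁.Infinite) (hinf₂ : L₂.Infinite) :
    (∀ t, m + n - 1 ≤ t → urep t ∈ langOA L₁ L₂) ∧ scLe (langOA L₁ L₂) (m + n) :=
  unary_infinite_oa_upper_bound_general m n L₁ L₂ h₁ h₂ hinf₁ hinf₂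
end

section
/- Let m, n ≥ 2, L_m = { a^(mk+n−1) : k ∈ ℤ, mk+n−1 ≥ 0 } and L_n = { a^(nk+m−1) : k ∈ ℤ, nk+m−1 ≥ 0 }. Then a^(m+n−2) ∉ L_m ⊙ L_n, while a^t ∈ L_m ⊙ L_n for all t ≥ m+n−1. -/
lemma urep_append (a b : ℕ) : urep a ++ urep b = urep (a + b) := by
  rw [urep, urep, urep, List.replicate_add]

lemma urep_len (a : ℕ) : (urep a).length = a := by simp [urep]

theorem unary_witness (m n : ℕ) (hm : 2 ≤ m) (hn : 2 ≤ n)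
    (Lm Ln : Language Unit)
    (hLm : Lm = {w | ∃ s : ℕ, w = urep s ∧ ∃ k : ℤ, (s : ℤ) = m * k + n - 1})
    (hLn : Ln = {w | ∃ s : ℕ, w = urep s ∧ ∃ k : ℤ, (s : ℤ) = n * k + m - 1}) :
    urep (m + n - 2) ∉ langOA Lm Ln ∧ ∀ t, m + n - 1 ≤ t → urep t ∈ langOA Lm Ln := by
  constructor
  · intro h
    obtain ⟨u, v, w, hv, hu, hvw, heq⟩ := h
    rw [hLm] at hu
    rw [hLn] at hvw
    obtain ⟨s, hus, k, hk⟩ := hu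
    obtain ⟨r, hvr, k', hk'⟩ := hvw
    have hs : u.length + v.length = s := by
      have := congrArg List.length hus; simpa [urep_len] using this
    have hr : v.length + w.length = r := by
      have := congrArg List.length hvr; simpa [urep_len] using this
    have ht : m + n - 2 = u.length + v.length + w.length := by
      have := congrArg List.length heq; simp [urep_len] at this; omega
    have hb : 1 ≤ v.length := List.length_pos_iff.mpr hv
    set a := u.length
    set b := v.length
    set c := w.length
    -- integer arithmetic
    have hk0 : k ≤ 0 := by
      by_contra hc
      push_neg at hc
      have h1 : (m : ℤ) * 1 ≤ m * k :=
        mul_le_mul_of_nonneg_left hc (by positivity)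
      have h2 : (a : ℤ) + b + c = (m : ℤ) + n - 2 := by
        have : a + b + c + 2 = m + n := by omega
        have := congrArg (fun x : ℕ => (x : ℤ)) this
        push_cast at this; linarith
      have h3 : (a : ℤ) + b = m * k + n - 1 := by push_cast at hk ⊢; linarith
      have hc0 : (0 : ℤ) ≤ c := by positivity
      linarith
    have hmk : (m : ℤ) * k ≤ 0 :=
      mul_nonpos_of_nonneg_of_nonpos (by positivity) hk0
    have hk0' : k' ≤ 0 := by
      by_contra hc
      push_neg at hc
      have h1 : (n : ℤ) * 1 ≤ n * k' :=
        mul_le_mul_of_nonneg_left hc (by positivity)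
      have h2 : (a : ℤ) + b + c = (m : ℤ) + n - 2 := by
        have : a + b + c + 2 = m + n := by omega
        have := congrArg (fun x : ℕ => (x : ℤ)) this
        push_cast at this; linarith
      have h3 : (b : ℤ) + c = n * k' + m - 1 := by push_cast at hk' ⊢; linarith
      have ha0 : (0 : ℤ) ≤ a := by positivity
      linarith
    have hnk : (n : ℤ) * k' ≤ 0 :=
      mul_nonpos_of_nonneg_of_nonpos (by positivity) hk0'
    have h3 : (a : ℤ) + b = m * k + n - 1 := by push_cast at hk ⊢; linarith
    have h4 : (b : ℤ) + c = n * k' + m - 1 := by push_cast at hk' ⊢; linarith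
    have h2 : (a : ℤ) + b + c = (m : ℤ) + n - 2 := by
      have : a + b + c + 2 = m + n := by omega
      have := congrArg (fun x : ℕ => (x : ℤ)) this
      push_cast at this; linarith
    have hb' : (1 : ℤ) ≤ b := by exact_mod_cast hb
    linarith
  · intro t ht
    have hm0 : 0 < m := by omega
    have hn0 : 0 < n := by omega
    have h1 := Nat.div_add_mod (t - (n - 1)) m
    have h2 := Nat.mod_lt (t - (n - 1)) hm0
    have h3 := Nat.div_add_mod (t - (m - 1)) n
    have h4 := Nat.mod_lt (t - (m - 1)) hn0
    set q1 := (t - (n - 1)) / m with hq1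
    set q2 := (t - (m - 1)) / n with hq2
    set P := m * q1 with hP
    set Q := n * q2 with hQ
    set s := n - 1 + P with hs
    set r := m - 1 + Q with hr
    have hsle : s ≤ t := by omega
    have hrle : r ≤ t := by omega
    have hsum : t + 1 ≤ s + r := by omega
    refine ⟨urep (t - r), urep (s + r - t), urep (t - s), ?_, ?_, ?_, ?_⟩
    · intro hnil
      have := congrArg List.length hnil
      simp [urep_len] at this
      omega
    · rw [hLm]
      refine ⟨s, ?_, (q1 : ℤ), ?_⟩
      · rw [urep_append]; congr 1; omega
      · rw [hs, hP]
        have hn1 : 1 ≤ n := by omega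
        push_cast [Nat.cast_sub hn1]
        ring
    · rw [hLn]
      refine ⟨r, ?_, (q2 : ℤ), ?_⟩
      · rw [urep_append]; congr 1; omega
      · rw [hr, hQ]
        have hm1 : 1 ≤ m := by omega
        push_cast [Nat.cast_sub hm1]
        ring
    · rw [urep_append, urep_append]; congr 1; omega
end
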